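/- As formal power series in ℤ[[q]], the tail of 8₅ = P(3,3,2) is not a product of theta/false theta functions of the shape predicted by the edge-connected-polygon formula: (q)_∞² · Σ_{a,b ≥ 0} (q^{a² + a + b² + b} / ((q)_a (q)_b)) · [a+b choose b]_q ≠ h_4(q)² · h_3(q), where [a+b choose b]_q = (q)_{a+b} / ((q)_a (q)_b) is the q-binomial coefficient. (Indeed, the coefficients of q¹ are −2 and −3, respectively.) -/

import Mathlib

/-- `ε_b(n)`: `(−1)^n` if `b` is odd; if `b` is even, `1` for `n ≥ 0` and `−1` for `n < 0`. -/
def eps (b : ℕ) (n : ℤ) : ℤ :=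
  if Odd b then (if Even n then 1 else -1)
  else (if 0 ≤ n then 1 else -1)

/-- The exponent `b·n(n+1)/2 − n` (an integer, nonnegative for `b ≥ 1`). -/
def hExp (b : ℕ) (n : ℤ) : ℤ := (b : ℤ) * (n * (n + 1)) / 2 - n

/-- `h_b(q) = Σ_{n∈ℤ} ε_b(n) q^{b n(n+1)/2 − n}` in `ℤ[[q]]`. -/
noncomputable def hSeries (b : ℕ) : PowerSeries ℤ :=
  PowerSeries.mk fun m => ∑' n : ℤ, if hExp b n = (m : ℤ) then eps b n else 0

/-- The finite `q`-Pochhammer symbol `(q)_n = Π_{k=1}^{n} (1 − q^k)` in `ℤ[[q]]`. -/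
noncomputable def qPoch (n : ℕ) : PowerSeries ℤ :=
  ∏ k ∈ Finset.range n, (1 - (PowerSeries.X : PowerSeries ℤ) ^ (k + 1))

/-- The multiplicative inverse `1/(q)_n` in `ℤ[[q]]` (the constant coefficient of
`(q)_n` is `1`, so it is invertible). -/
noncomputable def qPochInv (n : ℕ) : PowerSeries ℤ :=
  PowerSeries.invOfUnit (qPoch n) 1

/-- `(q)_∞ = Π_{k≥1} (1 − q^k) ∈ ℤ[[q]]`: the coefficient of `q^m` equals the coefficient
of `q^m` in any partial product `(q)_N` with `N > m`. -/
noncomputable def qPochInf : PowerSeries ℤ :=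
  PowerSeries.mk fun m => PowerSeries.coeff m (qPoch (m + 1))

/-- The sum `Σ_i F_i` of a family of power series, convergent in the formal power series
topology: the coefficient of `q^m` is the (finite) sum of the `q^m`-coefficients. -/
noncomputable def seriesSum {ι : Type*} (F : ι → PowerSeries ℤ) : PowerSeries ℤ :=
  PowerSeries.mk fun m => ∑' i, PowerSeries.coeff m (F i)


/-- The `q`-binomial coefficient `[n choose k]_q = (q)_n / ((q)_k (q)_{n−k})` in `ℤ[[q]]`. -/
noncomputable def qBinom (n k : ℕ) : PowerSeries ℤ :=
  qPoch n * qPochInv k * qPochInv (n - k)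

open PowerSeries

lemma coeff1_mul (f g : PowerSeries ℤ) :
    coeff 1 (f*g) = coeff 0 f * coeff 1 g + coeff 1 f * coeff 0 g := by
  rw [coeff_mul, show Finset.HasAntidiagonal.antidiagonal 1 = {(0,1),(1,0)} from rfl]
  simp

lemma coeff0_mul (f g : PowerSeries ℤ) :
    coeff 0 (f*g) = coeff 0 f * coeff 0 g := by
  simp [coeff_mul]

lemma qPochInv_zero : qPochInv 0 = 1 := by
  have := PowerSeries.mul_invOfUnit (qPoch 0) 1 (by simp [qPoch])
  simpa [qPoch, qPochInv] using this

lemma hExp4 (n : ℤ) : hExp 4 n = n * (2*n + 1) := by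
  unfold hExp
  have h : ((4:ℕ):ℤ) * (n*(n+1)) = 2 * (2*(n*(n+1))) := by push_cast; ring
  rw [h, Int.mul_ediv_cancel_left _ two_ne_zero]; ring

lemma hExp3 (n : ℤ) : 2 * hExp 3 n = n * (3*n + 1) := by
  obtain ⟨k, hk⟩ := Int.even_mul_succ_self n
  unfold hExp
  have h : ((3:ℕ):ℤ) * (n*(n+1)) = 2 * (3*k) := by push_cast; rw [hk]; ring
  rw [h, Int.mul_ediv_cancel_left _ two_ne_zero]
  linear_combination -3 * hk

lemma eps4_0 : eps 4 0 = 1 := by decide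
lemma eps4_neg1 : eps 4 (-1) = -1 := by decide
lemma eps3_0 : eps 3 0 = 1 := by decide
lemma eps3_neg1 : eps 3 (-1) = -1 := by decide

lemma coeff_h4_0 : coeff 0 (hSeries 4) = 1 := by
  rw [hSeries, coeff_mk]
  rw [tsum_eq_single (0:ℤ)]
  · norm_num [hExp4, eps4_0]
  · intro n hn
    rw [if_neg]
    rw [hExp4]
    intro h
    have h0 : n * (2*n+1) = 0 := by exact_mod_cast h
    rcases mul_eq_zero.mp h0 with h' | h' <;> omega

lemma coeff_h4_1 : coeff 1 (hSeries 4) = -1 := by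
  rw [hSeries, coeff_mk]
  rw [tsum_eq_single (-1:ℤ)]
  · norm_num [hExp4, eps4_neg1]
  · intro n hn
    rw [if_neg]
    rw [hExp4]
    intro h
    have h0 : n * (2*n+1) = 1 := by exact_mod_cast h
    have h2 : (n + 1) * (2*n - 1) = 0 := by linear_combination h0
    rcases mul_eq_zero.mp h2 with h' | h' <;> omega

lemma coeff_h3_0 : coeff 0 (hSeries 3) = 1 := by
  rw [hSeries, coeff_mk]
  rw [tsum_eq_single (0:ℤ)]
  · have h0 : hExp 3 0 = 0 := by have := hExp3 0; omega
    norm_num [h0, eps3_0]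
  · intro n hn
    rw [if_neg]
    intro h
    have h3 := hExp3 n
    have h0 : hExp 3 n = 0 := by exact_mod_cast h
    rw [h0] at h3
    rcases mul_eq_zero.mp (by linarith : n * (3*n+1) = 0) with h' | h' <;> omega

lemma coeff_h3_1 : coeff 1 (hSeries 3) = -1 := by
  rw [hSeries, coeff_mk]
  rw [tsum_eq_single (-1:ℤ)]
  · have h0 : hExp 3 (-1) = 1 := by have := hExp3 (-1); omega
    norm_num [h0, eps3_neg1]
  · intro n hn
    rw [if_neg]
    intro h
    have h3 := hExp3 n
    have h0 : hExp 3 n = 1 := by exact_mod_cast h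
    rw [h0] at h3
    have h2 : (n + 1) * (3*n - 2) = 0 := by linear_combination -h3
    rcases mul_eq_zero.mp h2 with h' | h' <;> omega


lemma coeff_inf_0 : coeff 0 qPochInf = 1 := by
  simp [qPochInf, qPoch]

lemma coeff_inf_1 : coeff 1 qPochInf = -1 := by
  rw [qPochInf, coeff_mk]
  have : qPoch (1 + 1) = 1 - X - X^2 + X^3 := by
    simp [qPoch, Finset.prod_range_succ]
    ring
  rw [this]
  simp [coeff_X_pow]

noncomputable def Fp (p : ℕ × ℕ) : PowerSeries ℤ :=
  (PowerSeries.X : PowerSeries ℤ) ^ (p.1 ^ 2 + p.1 + p.2 ^ 2 + p.2) *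
    qPochInv p.1 * qPochInv p.2 * qBinom (p.1 + p.2) p.2

lemma Fp_zero : Fp (0, 0) = 1 := by
  simp [Fp, qBinom, qPochInv_zero, qPoch]

lemma Fp_coeff_vanish (p : ℕ × ℕ) (hp : p ≠ (0,0)) (m : ℕ) (hm : m < 2) :
    coeff m (Fp p) = 0 := by
  obtain ⟨a, b⟩ := p
  have ha : a ≤ a^2 := by nlinarith
  have hb : b ≤ b^2 := by nlinarith
  have hab : a + b ≥ 1 := by
    rcases Nat.eq_zero_or_pos (a+b) with h | h
    · exfalso; apply hp; simp at h ⊢; omega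
    · omega
  have he : 2 ≤ a^2 + a + b^2 + b := by omega
  have hdvd : (X : PowerSeries ℤ)^2 ∣ Fp (a, b) := by
    refine dvd_trans (pow_dvd_pow X he) ?_
    unfold Fp
    exact (((dvd_mul_right _ _).mul_right _).mul_right _)
  rw [PowerSeries.X_pow_dvd_iff] at hdvd
  exact hdvd m hm

lemma coeff_S_0 : coeff 0 (seriesSum Fp) = 1 := by
  rw [seriesSum, coeff_mk, tsum_eq_single ((0,0) : ℕ × ℕ)]
  · rw [Fp_zero]; simp
  · intro p hp
    exact Fp_coeff_vanish p hp 0 (by omega)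

lemma coeff_S_1 : coeff 1 (seriesSum Fp) = 0 := by
  rw [seriesSum, coeff_mk, tsum_eq_single ((0,0) : ℕ × ℕ)]
  · rw [Fp_zero]; simp
  · intro p hp
    exact Fp_coeff_vanish p hp 1 (by omega)

/-- The tail of `8₅ = P(3,3,2)` is not the product `h_4² h_3` predicted by the
edge-connected-polygon formula:
`(q)_∞² · Σ_{a,b≥0} (q^{a²+a+b²+b}/((q)_a (q)_b)) · [a+b choose b]_q ≠ h_4(q)² · h_3(q)`
in `ℤ[[q]]` (the coefficients of `q¹` are `−2` and `−3`, respectively). -/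
theorem tail_8_5_ne_h4_sq_h3 :
    qPochInf ^ 2 * seriesSum (fun p : ℕ × ℕ =>
      (PowerSeries.X : PowerSeries ℤ) ^ (p.1 ^ 2 + p.1 + p.2 ^ 2 + p.2) *
        qPochInv p.1 * qPochInv p.2 * qBinom (p.1 + p.2) p.2)
      ≠ hSeries 4 ^ 2 * hSeries 3 := by
  intro h
  have hF : (fun p : ℕ × ℕ =>
      (PowerSeries.X : PowerSeries ℤ) ^ (p.1 ^ 2 + p.1 + p.2 ^ 2 + p.2) *
        qPochInv p.1 * qPochInv p.2 * qBinom (p.1 + p.2) p.2) = Fp := rfl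
  rw [hF] at h
  have hc := congrArg (PowerSeries.coeff 1) h
  rw [sq, sq, coeff1_mul, coeff1_mul, coeff0_mul, coeff1_mul, coeff0_mul, coeff1_mul] at hc
  rw [coeff_inf_0, coeff_inf_1, coeff_S_0, coeff_S_1, coeff_h4_0, coeff_h4_1,
    coeff_h3_0, coeff_h3_1] at hc
  norm_num at hc
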